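/- Let G be a k-connected graph with vertex r, and let C be a configuration on G of size n + y (y ≥ 0, n = |V(G)|) with exactly z vertices carrying zero pebbles. If ⌈(y+3z)/2⌉ ≤ k, then C is ⌈(y+z)/2⌉-fold r-solvable. -/

import Mathlib

open SimpleGraph

open Classical in
/-- A single pebbling step: remove two pebbles from `u` and add one to an adjacent `v`. -/
def PebStep {V : Type*} (G : SimpleGraph V) (C C' : V → ℕ) : Prop :=
  ∃ u v, G.Adj u v ∧ 2 ≤ C u ∧
    ∀ w, C' w = if w = u then C w - 2 else if w = v then C w + 1 else C w

/-- `C` is `t`-fold `r`-solvable: some sequence of pebbling steps places `t` pebbles on `r`. -/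
def Solvable {V : Type*} (G : SimpleGraph V) (C : V → ℕ) (r : V) (t : ℕ) : Prop :=
  ∃ C', Relation.ReflTransGen (PebStep G) C C' ∧ t ≤ C' r

/-- The size of a configuration: total number of pebbles. -/
def confSize {V : Type*} [Fintype V] (C : V → ℕ) : ℕ := ∑ v, C v

/-- The potential of a configuration: the number of pairwise disjoint pairs of
pebbles sitting on common vertices, `∑ v, ⌊C v / 2⌋`. -/
def potential {V : Type*} [Fintype V] (C : V → ℕ) : ℕ := ∑ v, C v / 2

/-- Number of vertices with no pebbles. -/
noncomputable def numZeros {V : Type*} [Fintype V] (C : V → ℕ) : ℕ :=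
  {v : V | C v = 0}.ncard

/-- The `t`-pebbling number of `G` with root `r`. -/
noncomputable def piT {V : Type*} [Fintype V] (G : SimpleGraph V) (r : V) (t : ℕ) : ℕ :=
  sInf {m | ∀ C : V → ℕ, m ≤ confSize C → Solvable G C r t}

/-- The `t`-pebbling number of `G`. -/
noncomputable def piTG {V : Type*} [Fintype V] (G : SimpleGraph V) (t : ℕ) : ℕ :=
  Finset.univ.sup fun r => piT G r t

/-- `G` is `k`-connected: more than `k` vertices and deleting fewer than `k`
vertices leaves a connected graph. -/
def KConnected {V : Type*} [Fintype V] (G : SimpleGraph V) (k : ℕ) : Prop :=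
  k < Fintype.card V ∧
    ∀ S : Set V, S.ncard < k → ((⊤ : G.Subgraph).deleteVerts S).coe.Connected

/-- `u` is a universal vertex: adjacent to every other vertex. -/
def IsUniversal {V : Type*} (G : SimpleGraph V) (u : V) : Prop :=
  ∀ v, v ≠ u → G.Adj u v

/-! Let `t = ⌈(y + z)/2⌉`. Every vertex with a pebble has at most one pebble outside its pairs, so
`n + y ≤ 2 · potential + (n - z)` and at least `s = t - C r` pairs sit away from `r`. Split every
vertex `v` into an entry and an exit node; the source feeds the `⌊C v / 2⌋` pairs of `v` into its
exit, the entry–exit arc of `v` carries its odd pebble, and adjacencies become exit–entry arcs of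
capacity `s`. A cut of capacity below `s` cuts no adjacency arc; it cannot cut all source arcs, so
the vertices whose own arc it cuts separate some vertex from `r`. There are at least `k ≥ s + z`
of them and all but `z` contribute capacity, so by max-flow/min-cut there is an integral flow of
value `s`. Following its units one arc at a time executes it as `s` slides to `r`, each slide
moving a pair off its source and borrowing the reserved odd pebble of every vertex it passes. -/

open Finset

namespace Network

section Flows

variable {N : Type*} [Fintype N]

def outflow (F : N → N → ℕ) (a : N) : ℕ := ∑ b, F a b

def inflow (F : N → N → ℕ) (b : N) : ℕ := ∑ a, F a b

def excess (F : N → N → ℕ) (a : N) : ℤ := outflow F a - inflow F a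

def mass (F : N → N → ℕ) : ℕ := ∑ a, outflow F a

lemma outflow_add (F F' : N → N → ℕ) (a : N) :
    outflow (F + F') a = outflow F a + outflow F' a :=
  sum_add_distrib

lemma inflow_add (F F' : N → N → ℕ) (b : N) :
    inflow (F + F') b = inflow F b + inflow F' b :=
  sum_add_distrib

lemma excess_add (F F' : N → N → ℕ) (a : N) :
    excess (F + F') a = excess F a + excess F' a := by
  simp only [excess, outflow_add, inflow_add]
  push_cast
  ring

lemma exists_pos_of_outflow_pos {F : N → N → ℕ} {a : N} (h : 0 < outflow F a) :
    ∃ b, 0 < F a b := by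
  obtain ⟨b, -, hb⟩ := exists_ne_zero_of_sum_ne_zero h.ne'
  exact ⟨b, Nat.pos_of_ne_zero hb⟩

lemma inflow_eq_zero_of_le {F c : N → N → ℕ} (hF : F ≤ c) {s : N} (hs : ∀ a, c a s = 0) :
    inflow F s = 0 :=
  sum_eq_zero fun a _ => Nat.eq_zero_of_le_zero (hs a ▸ hF a s)

end Flows

section Arcs

variable {N : Type*} [DecidableEq N]

def arc (a b : N) : N → N → ℕ := fun x y => if x = a ∧ y = b then 1 else 0

lemma arc_apply (a b x y : N) : arc a b x y = if x = a ∧ y = b then 1 else 0 := rfl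

lemma exists_eq_add_arc {F : N → N → ℕ} {a b : N} (h : 0 < F a b) :
    ∃ F', F = F' + arc a b := by
  refine ⟨F - arc a b, (tsub_add_cancel_of_le fun x y => ?_).symm⟩
  rw [arc_apply]
  split_ifs with hxy
  · obtain ⟨rfl, rfl⟩ := hxy
    exact h
  · exact Nat.zero_le _

variable [Fintype N]

lemma outflow_arc (a b x : N) : outflow (arc a b) x = if x = a then 1 else 0 := by
  by_cases hx : x = a <;> simp [outflow, arc, hx]

lemma inflow_arc (a b y : N) : inflow (arc a b) y = if y = b then 1 else 0 := by
  by_cases hy : y = b <;> simp [inflow, arc, hy]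

lemma excess_arc (a b x : N) :
    excess (arc a b) x = (if x = a then 1 else 0) - (if x = b then 1 else 0) := by
  simp only [excess, outflow_arc, inflow_arc]
  split_ifs <;> simp

lemma mass_add_arc (F : N → N → ℕ) (a b : N) : mass (F + arc a b) = mass F + 1 := by
  simp [mass, outflow_add, outflow_arc, sum_add_distrib]

end Arcs

section MaxFlowMinCut

variable {N : Type*} [Fintype N] [DecidableEq N]

lemma sum_excess_eq (F : N → N → ℕ) (R : Finset N) :
    ∑ a ∈ R, excess F a = ∑ a ∈ R, ∑ b ∈ Rᶜ, (F a b : ℤ) - ∑ a ∈ R, ∑ b ∈ Rᶜ, (F b a : ℤ) := by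
  have hR : ∑ a ∈ R, ∑ b ∈ R, (F a b : ℤ) = ∑ a ∈ R, ∑ b ∈ R, (F b a : ℤ) := sum_comm
  simp only [excess, outflow, inflow, ← sum_add_sum_compl R]
  push_cast
  simp only [sum_sub_distrib, sum_add_distrib]
  linarith

variable (c : N → N → ℕ) (s t : N)

def IsFlow (F : N → N → ℕ) : Prop :=
  F ≤ c ∧ ∀ x, x ≠ s → x ≠ t → excess F x = 0

def cutCap (R : Finset N) : ℕ := ∑ a ∈ R, ∑ b ∈ Rᶜ, c a b

def Residual (F : N → N → ℕ) (a b : N) : Prop := F a b < c a b ∨ 0 < F b a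

variable {c s t}

lemma sum_le_cutCap {R T : Finset N} (hT : ∀ b ∈ T, b ∉ R) :
    ∑ b ∈ T, ∑ a ∈ R, c a b ≤ cutCap c R :=
  calc ∑ b ∈ T, ∑ a ∈ R, c a b ≤ ∑ b ∈ Rᶜ, ∑ a ∈ R, c a b :=
        sum_le_sum_of_subset fun b hb => mem_compl.mpr (hT b hb)
    _ = cutCap c R := sum_comm

lemma IsFlow.excess_eq_cutCap {F : N → N → ℕ} (hF : IsFlow c s t F) {R : Finset N} (hs : s ∈ R)
    (ht : t ∉ R) (hsat : ∀ a ∈ R, ∀ b ∉ R, F a b = c a b ∧ F b a = 0) :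
    excess F s = cutCap c R := by
  have hsum : ∑ a ∈ R, excess F a = excess F s :=
    sum_eq_single s (fun a _ has => hF.2 a has (by rintro rfl; contradiction)) (absurd hs)
  have hback : ∑ a ∈ R, ∑ b ∈ Rᶜ, (F b a : ℤ) = 0 :=
    sum_eq_zero fun a ha => sum_eq_zero fun b hb => by
      simp [(hsat a ha b (mem_compl.mp hb)).2]
  rw [← hsum, sum_excess_eq, hback, sub_zero, cutCap]
  push_cast
  exact sum_congr rfl fun a ha => sum_congr rfl fun b hb => by
    rw [(hsat a ha b (mem_compl.mp hb)).1]

lemma Residual.exists_augment {F : N → N → ℕ} (hF : F ≤ c) {a b : N} (h : Residual c F a b) :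
    ∃ F', F' ≤ c ∧ (∀ x, excess F' x = excess F x + (if x = a then 1 else 0) -
        (if x = b then 1 else 0)) ∧ ∀ x y, x ≠ a → y ≠ a → F' x y = F x y := by
  rcases h with hlt | hpos
  · refine ⟨F + arc a b, fun x y => ?_, fun x => by rw [excess_add, excess_arc]; ring,
      fun x y hx _ => by simp [arc_apply, hx]⟩
    have := hF x y
    simp only [Pi.add_apply, arc_apply]
    split_ifs with hxy
    · obtain ⟨rfl, rfl⟩ := hxy
      omega
    · simpa using this
  · obtain ⟨F', rfl⟩ := exists_eq_add_arc hpos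
    exact ⟨F', le_of_add_le_left hF, fun x => by rw [excess_add, excess_arc]; ring,
      fun x y _ hy => by simp [arc_apply, hy]⟩

theorem exists_augment_of_isChain {F : N → N → ℕ} (hF : F ≤ c) {a : N} {l : List N}
    (hl : (a :: l).IsChain (Residual c F)) :
    ∃ F', F' ≤ c ∧ ∀ x, excess F' x = excess F x + (if x = a then 1 else 0) -
      (if x = (a :: l).getLast (List.cons_ne_nil a l) then 1 else 0) := by
  by_cases ha : a ∈ l
  · -- cutting off the loops through `a` makes the augmentations along the arcs independent
    obtain ⟨l₁, l₂, rfl⟩ := List.append_of_mem ha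
    obtain ⟨F', hF', hex⟩ :=
      exists_augment_of_isChain hF (List.IsChain.right_of_append (l₁ := a :: l₁) hl)
    refine ⟨F', hF', fun x => ?_⟩
    rw [hex, ← List.getLast_append_of_ne_nil (l := a :: l₁) _ (List.cons_ne_nil a l₂)]
    rfl
  · match l, hl, ha with
    | [], _, _ => exact ⟨F, hF, fun x => by rw [List.getLast_singleton, add_sub_cancel_right]⟩
    | b :: l', hl, ha =>
      rw [List.isChain_cons_cons] at hl
      obtain ⟨F₁, hF₁, hex₁, hagree⟩ := hl.1.exists_augment hF
      have hl' : (b :: l').IsChain (Residual c F₁) := hl.2.imp_of_mem_imp fun x y hx hy h => by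
        have hxa : x ≠ a := by rintro rfl; exact ha hx
        have hya : y ≠ a := by rintro rfl; exact ha hy
        rwa [Residual, hagree x y hxa hya, hagree y x hya hxa]
      obtain ⟨F', hF', hex⟩ := exists_augment_of_isChain hF₁ hl'
      refine ⟨F', hF', fun x => ?_⟩
      rw [hex, hex₁, List.getLast_cons_cons]
      ring
termination_by l.length
decreasing_by all_goals (subst_vars; simp <;> omega)

lemma IsFlow.exists_augment {F : N → N → ℕ} (hF : IsFlow c s t F) (hs : ∀ a, c a s = 0)
    (hst : s ≠ t) (h : Relation.ReflTransGen (Residual c F) s t) :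
    ∃ F', IsFlow c s t F' ∧ outflow F' s = outflow F s + 1 := by
  obtain ⟨l, hl, hlast⟩ := List.exists_isChain_cons_of_relationReflTransGen h
  obtain ⟨F', hF', hex⟩ := exists_augment_of_isChain hF.1 hl
  rw [hlast] at hex
  refine ⟨F', ⟨hF', fun x hxs hxt => by rw [hex, hF.2 x hxs hxt]; simp [hxs, hxt]⟩, ?_⟩
  have hexs := hex s
  simp only [excess, inflow_eq_zero_of_le hF' hs, inflow_eq_zero_of_le hF.1 hs, if_neg hst,
    if_true, CharP.cast_eq_zero, sub_zero] at hexs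
  omega

theorem IsFlow.exists_saturated_cut {F : N → N → ℕ} (hF : IsFlow c s t F)
    (hs : ∀ a, c a s = 0) (hst : s ≠ t) :
    ∃ F', IsFlow c s t F' ∧ ∃ R : Finset N, s ∈ R ∧ t ∉ R ∧
      ∀ a ∈ R, ∀ b ∉ R, F' a b = c a b ∧ F' b a = 0 := by
  classical
  by_cases h : Relation.ReflTransGen (Residual c F) s t
  · obtain ⟨F', hF', hval⟩ := hF.exists_augment hs hst h
    have hbound : outflow F' s ≤ ∑ b, c s b := sum_le_sum fun b _ => hF'.1 s b
    exact hF'.exists_saturated_cut hs hst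
  · refine ⟨F, hF, univ.filter (Relation.ReflTransGen (Residual c F) s),
      by simp [Relation.ReflTransGen.refl], by simpa, ?_⟩
    simp only [mem_filter, mem_univ, true_and]
    intro a ha b hb
    have hlt : ¬ F a b < c a b := fun hlt => hb (ha.tail (Or.inl hlt))
    have hpos : ¬ 0 < F b a := fun hpos => hb (ha.tail (Or.inr hpos))
    exact ⟨le_antisymm (hF.1 a b) (not_lt.mp hlt), Nat.eq_zero_of_not_pos hpos⟩
termination_by ∑ b, c s b - outflow F s

theorem exists_isFlow_le_outflow (hs : ∀ a, c a s = 0) (hst : s ≠ t) {m : ℕ}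
    (hcut : ∀ R : Finset N, s ∈ R → t ∉ R → m ≤ cutCap c R) :
    ∃ F, IsFlow c s t F ∧ m ≤ outflow F s := by
  have hzero : IsFlow c s t 0 :=
    ⟨fun _ _ => Nat.zero_le _, fun x _ _ => by simp [excess, outflow, inflow]⟩
  obtain ⟨F, hF, R, hsR, htR, hsat⟩ := hzero.exists_saturated_cut hs hst
  have hval := hF.excess_eq_cutCap hsR htR hsat
  rw [excess, inflow_eq_zero_of_le hF.1 hs] at hval
  have := hcut R hsR htR
  exact ⟨F, hF, by omega⟩

end MaxFlowMinCut

end Network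

theorem le_ncard_of_separates {V : Type*} {G : SimpleGraph V} {k : ℕ}
    (hconn : ∀ S : Set V, S.ncard < k → ((⊤ : G.Subgraph).deleteVerts S).coe.Connected)
    {W B : Set V} (hW : ∀ v ∈ W, ∀ w, G.Adj v w → w ∈ W ∨ w ∈ B) {u x : V} (hu : u ∈ W)
    (huB : u ∉ B) (hx : x ∉ W) (hxB : x ∉ B) : k ≤ B.ncard := by
  by_contra! hlt
  obtain ⟨p⟩ := (hconn B hlt).preconnected ⟨u, by simp [huB]⟩ ⟨x, by simp [hxB]⟩
  obtain ⟨d, -, hd₁, hd₂⟩ := p.exists_boundary_dart {y | y.1 ∈ W} hu hx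
  have hadj : G.Adj d.fst d.snd := by simpa using d.adj.2.2
  rcases hW _ hd₁ _ hadj with h | h
  · exact hd₂ h
  · exact (by simpa using d.snd.2 : d.snd.1 ∉ B) h

lemma PebStep.exists_of_adj {V : Type*} [DecidableEq V] {G : SimpleGraph V} {D : V → ℕ}
    {x u : V} (hxu : G.Adj x u) (hx : 2 ≤ D x) :
    ∃ D', PebStep G D D' ∧
      ∀ v, D' v + (if v = x then 2 else 0) = D v + (if v = u then 1 else 0) := by
  refine ⟨fun v => if v = x then D v - 2 else if v = u then D v + 1 else D v,
    ⟨x, u, hxu, hx, fun w => by dsimp only; split_ifs <;> rfl⟩, fun v => ?_⟩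
  have := hxu.ne
  dsimp only
  split_ifs <;> subst_vars <;> first | omega | contradiction

section PebblingNetwork

open Network

variable {V : Type*}

def inNode (v : V) : Option (V ⊕ V) := some (.inl v)

def outNode (v : V) : Option (V ⊕ V) := some (.inr v)

@[simp] lemma inNode_inj {v w : V} : inNode v = inNode w ↔ v = w := by simp [inNode]
@[simp] lemma outNode_inj {v w : V} : outNode v = outNode w ↔ v = w := by simp [outNode]
@[simp] lemma outNode_ne_inNode (v w : V) : outNode v ≠ inNode w := by simp [inNode, outNode]
@[simp] lemma inNode_ne_none (v : V) : inNode v ≠ none := by simp [inNode]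
@[simp] lemma outNode_ne_none (v : V) : outNode v ≠ none := by simp [outNode]
@[simp] lemma none_ne_inNode (v : V) : none ≠ inNode v := by simp [inNode]
@[simp] lemma none_ne_outNode (v : V) : none ≠ outNode v := by simp [outNode]

def cutVertices [Fintype V] [DecidableEq V] (r : V) (R : Finset (Option (V ⊕ V))) : Finset V :=
  {v | v ≠ r ∧ inNode v ∈ R ∧ outNode v ∉ R}

/-- The cut vertices separate `w` from `r`. -/
lemma le_card_cutVertices [Fintype V] [DecidableEq V] {G : SimpleGraph V} {r : V} {k : ℕ}
    (hconn : ∀ S : Set V, S.ncard < k → ((⊤ : G.Subgraph).deleteVerts S).coe.Connected)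
    {R : Finset (Option (V ⊕ V))} (hsink : inNode r ∉ R)
    (hclosed : ∀ v w, outNode v ∈ R → G.Adj v w → inNode w ∈ R) {w : V} (hwr : w ≠ r)
    (hw : outNode w ∈ R) : k ≤ #(cutVertices r R) := by
  rw [← Set.ncard_coe_finset]
  refine le_ncard_of_separates hconn (W := {v | v ≠ r ∧ outNode v ∈ R}) (x := r) ?_ ⟨hwr, hw⟩
    (by simp [cutVertices, hw]) (by simp) (by simp [cutVertices])
  rintro v ⟨-, hv⟩ u hvu
  have hu := hclosed v u hv hvu
  have hur : u ≠ r := by rintro rfl; exact hsink hu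
  by_cases huo : outNode u ∈ R
  · exact Or.inl ⟨hur, huo⟩
  · exact Or.inr (by simp [cutVertices, hur, hu, huo])

variable [DecidableEq V] (G : SimpleGraph V) [DecidableRel G.Adj] (r : V) (C : V → ℕ) (M : ℕ)

/-- The source is `none`. A unit of flow from it into `outNode v` is a pair of pebbles of `v`
starting a slide, a unit through `inNode v → outNode v` is a slide passing `v` and using the odd
pebble of `v`; the sink is `inNode r`. -/
def pebblingCap : Option (V ⊕ V) → Option (V ⊕ V) → ℕ
  | none, some (.inr v) => if v = r then 0 else C v / 2
  | some (.inl v), some (.inr w) => if v = w ∧ v ≠ r then C v % 2 else 0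
  | some (.inr v), some (.inl w) => if G.Adj v w then M else 0
  | _, _ => 0

variable {G r C M}

@[simp] lemma pebblingCap_none_outNode (v : V) :
    pebblingCap G r C M none (outNode v) = if v = r then 0 else C v / 2 := rfl

@[simp] lemma pebblingCap_inNode_outNode (v : V) :
    pebblingCap G r C M (inNode v) (outNode v) = if v = r then 0 else C v % 2 := by
  simp [pebblingCap, inNode, outNode]

@[simp] lemma pebblingCap_outNode_inNode (v w : V) :
    pebblingCap G r C M (outNode v) (inNode w) = if G.Adj v w then M else 0 := rfl

lemma pebblingCap_none_right (a : Option (V ⊕ V)) : pebblingCap G r C M a none = 0 := by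
  rcases a with _ | _ | _ <;> rfl

lemma exists_outNode_of_pebblingCap_none_ne_zero {b : Option (V ⊕ V)}
    (h : pebblingCap G r C M none b ≠ 0) : ∃ v, v ≠ r ∧ b = outNode v := by
  rcases b with _ | v | v
  · exact absurd rfl h
  · exact absurd rfl h
  · refine ⟨v, fun hv => h ?_, rfl⟩
    simp [pebblingCap, hv]

lemma eq_outNode_of_pebblingCap_inNode_ne_zero {u : V} {b : Option (V ⊕ V)}
    (h : pebblingCap G r C M (inNode u) b ≠ 0) : b = outNode u ∧ u ≠ r := by
  rcases b with _ | w | w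
  · exact absurd rfl h
  · exact absurd rfl h
  · simp only [pebblingCap, inNode, ne_eq, ite_eq_right_iff, not_forall] at h
    obtain ⟨⟨rfl, hr⟩, -⟩ := h
    exact ⟨rfl, hr⟩

lemma exists_inNode_of_pebblingCap_outNode_ne_zero {x : V} {b : Option (V ⊕ V)}
    (h : pebblingCap G r C M (outNode x) b ≠ 0) : ∃ u, b = inNode u ∧ G.Adj x u := by
  rcases b with _ | u | u
  · exact absurd rfl h
  · refine ⟨u, rfl, ?_⟩
    by_contra hxu
    simp [pebblingCap, outNode, hxu] at h
  · exact absurd rfl h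

variable [Fintype V]

lemma outflow_inNode {F : Option (V ⊕ V) → Option (V ⊕ V) → ℕ} (hF : F ≤ pebblingCap G r C M)
    (u : V) : outflow F (inNode u) = F (inNode u) (outNode u) :=
  Fintype.sum_eq_single _ fun b hb => Nat.eq_zero_of_not_pos fun hpos =>
    hb (eq_outNode_of_pebblingCap_inNode_ne_zero (hpos.trans_le (hF (inNode u) b)).ne').1

mutual

theorem exists_gain_of_flow {F : Option (V ⊕ V) → Option (V ⊕ V) → ℕ}
    (hF : F ≤ pebblingCap G r C M) (hcons : ∀ y, y ≠ none → y ≠ inNode r → excess F y = 0)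
    {D : V → ℕ} (hD : ∀ v, 2 * F none (outNode v) + F (inNode v) (outNode v) ≤ D v) :
    ∃ D', Relation.ReflTransGen (PebStep G) D D' ∧ D r + outflow F none ≤ D' r := by
  rcases Nat.eq_zero_or_pos (outflow F none) with h0 | hpos
  · exact ⟨D, .refl, by omega⟩
  obtain ⟨b, hb⟩ := exists_pos_of_outflow_pos hpos
  obtain ⟨x, hx, rfl⟩ := exists_outNode_of_pebblingCap_none_ne_zero (hb.trans_le (hF none b)).ne'
  obtain ⟨F₀, rfl⟩ := exists_eq_add_arc hb
  have hcons₀ : ∀ y, y ≠ none → y ≠ inNode r → excess F₀ y = if y = outNode x then 1 else 0 := by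
    intro y hy hyr
    have := hcons y hy hyr
    rw [excess_add, excess_arc, if_neg hy] at this
    split_ifs at this ⊢ <;> omega
  have hD₀ : ∀ v, 2 * F₀ none (outNode v) + F₀ (inNode v) (outNode v) +
      (if v = x then 2 else 0) ≤ D v := by
    intro v
    have := hD v
    simp only [Pi.add_apply, arc_apply, true_and, outNode_inj, inNode_ne_none, false_and,
      if_false, add_zero] at this
    split_ifs at this ⊢ <;> omega
  obtain ⟨D', hD', hr⟩ := exists_gain_of_slide_leaving (le_of_add_le_left hF) hx hcons₀ hD₀
  refine ⟨D', hD', ?_⟩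
  rw [outflow_add, outflow_arc, if_pos rfl]
  omega
termination_by mass F
decreasing_by subst_vars; simp [mass_add_arc]

/-- A slide is under way: its pair of pebbles sits on `x` (the `2` in `hD`) and the unit of flow
carrying it is about to leave `outNode x`. -/
theorem exists_gain_of_slide_leaving {F : Option (V ⊕ V) → Option (V ⊕ V) → ℕ}
    (hF : F ≤ pebblingCap G r C M) {x : V} (hx : x ≠ r)
    (hcons : ∀ y, y ≠ none → y ≠ inNode r → excess F y = if y = outNode x then 1 else 0)
    {D : V → ℕ}
    (hD : ∀ v, 2 * F none (outNode v) + F (inNode v) (outNode v) + (if v = x then 2 else 0) ≤ D v) :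
    ∃ D', Relation.ReflTransGen (PebStep G) D D' ∧ D r + outflow F none + 1 ≤ D' r := by
  have hexc := hcons (outNode x) (by simp) (by simp)
  rw [if_pos rfl, excess] at hexc
  obtain ⟨b, hb⟩ := exists_pos_of_outflow_pos (show 0 < outflow F (outNode x) by omega)
  obtain ⟨u, rfl, hxu⟩ := exists_inNode_of_pebblingCap_outNode_ne_zero (hb.trans_le (hF _ b)).ne'
  obtain ⟨D₁, hstep, hD₁⟩ := PebStep.exists_of_adj (D := D) hxu
    (by have := hD x; rw [if_pos rfl] at this; omega)
  obtain ⟨F₁, rfl⟩ := exists_eq_add_arc hb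
  have hcons₁ : ∀ y, y ≠ none → y ≠ inNode r → excess F₁ y = if y = inNode u then 1 else 0 := by
    intro y hy hyr
    have := hcons y hy hyr
    rw [excess_add, excess_arc] at this
    split_ifs at this ⊢ <;> simp_all
    omega
  have hD₁' : ∀ v, 2 * F₁ none (outNode v) + F₁ (inNode v) (outNode v) +
      (if v = u then 1 else 0) ≤ D₁ v := by
    intro v
    have h₁ := hD v
    have h₂ := hD₁ v
    simp only [Pi.add_apply, arc_apply, none_ne_outNode, outNode_ne_inNode, and_self, ↓reduceIte,
      add_zero, and_false] at h₁
    split_ifs at h₁ h₂ ⊢ <;> omega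
  have hout : outflow (F₁ + arc (outNode x) (inNode u)) none = outflow F₁ none := by
    simp [outflow_add, outflow_arc]
  have hr := hD₁ r
  rw [if_neg hx.symm] at hr
  rcases eq_or_ne r u with rfl | hu
  · obtain ⟨D', hD', hr'⟩ := exists_gain_of_flow (D := D₁) (le_of_add_le_left hF)
      (fun y hy hyr => by rw [hcons₁ y hy hyr, if_neg hyr]) (fun v => by have := hD₁' v; omega)
    rw [if_pos rfl] at hr
    exact ⟨D', .head hstep hD', by omega⟩
  · obtain ⟨D', hD', hr'⟩ := exists_gain_of_slide_entering (le_of_add_le_left hF) hu.symm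
      hcons₁ hD₁'
    rw [if_neg hu] at hr
    exact ⟨D', .head hstep hD', by omega⟩
termination_by mass F
decreasing_by all_goals (subst_vars; simp [mass_add_arc])

/-- A slide is under way and its pebble has just arrived at `u`, which adds it to its own odd
pebble (the `1` in `hD`) to continue. -/
theorem exists_gain_of_slide_entering {F : Option (V ⊕ V) → Option (V ⊕ V) → ℕ}
    (hF : F ≤ pebblingCap G r C M) {u : V} (hu : u ≠ r)
    (hcons : ∀ y, y ≠ none → y ≠ inNode r → excess F y = if y = inNode u then 1 else 0)
    {D : V → ℕ}
    (hD : ∀ v, 2 * F none (outNode v) + F (inNode v) (outNode v) + (if v = u then 1 else 0) ≤ D v) :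
    ∃ D', Relation.ReflTransGen (PebStep G) D D' ∧ D r + outflow F none + 1 ≤ D' r := by
  have hexc := hcons (inNode u) (by simp) (by simpa using hu)
  rw [if_pos rfl, excess, outflow_inNode hF] at hexc
  obtain ⟨F₂, rfl⟩ := exists_eq_add_arc (show 0 < F (inNode u) (outNode u) by omega)
  have hcons₂ : ∀ y, y ≠ none → y ≠ inNode r → excess F₂ y = if y = outNode u then 1 else 0 := by
    intro y hy hyr
    have := hcons y hy hyr
    rw [excess_add, excess_arc] at this
    split_ifs at this ⊢ <;> simp_all
    omega
  have hD₂ : ∀ v, 2 * F₂ none (outNode v) + F₂ (inNode v) (outNode v) +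
      (if v = u then 2 else 0) ≤ D v := by
    intro v
    have := hD v
    simp only [Pi.add_apply, arc_apply, none_ne_inNode, outNode_inj, false_and, ↓reduceIte,
      add_zero, inNode_inj, and_self] at this
    split_ifs at this ⊢ <;> omega
  obtain ⟨D', hD', hr⟩ := exists_gain_of_slide_leaving (le_of_add_le_left hF) hu hcons₂ hD₂
  refine ⟨D', hD', ?_⟩
  simp only [outflow_add, outflow_arc, none_ne_inNode, if_false, add_zero]
  omega
termination_by mass F
decreasing_by subst_vars; simp [mass_add_arc]

end

lemma sum_outNode_le_cutCap {c : Option (V ⊕ V) → Option (V ⊕ V) → ℕ}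
    {R : Finset (Option (V ⊕ V))} {S : Finset V} (hS : ∀ v ∈ S, outNode v ∉ R) :
    ∑ v ∈ S, ∑ a ∈ R, c a (outNode v) ≤ cutCap c R := by
  rw [← sum_image (f := fun b => ∑ a ∈ R, c a b) fun v _ w _ h => outNode_inj.mp h]
  exact sum_le_cutCap (by simpa using hS)

lemma card_cutVertices_le_cutCap {z s : ℕ} (hzeros : #{v | C v = 0} ≤ z)
    {R : Finset (Option (V ⊕ V))} (hsrc : none ∈ R) :
    #(cutVertices r R) ≤ cutCap (pebblingCap G r C s) R + z := by
  have hsplit := card_filter_add_card_filter_not (s := cutVertices r R) (p := fun v => C v ≠ 0)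
  have hz : #{v ∈ cutVertices r R | ¬C v ≠ 0} ≤ #{v | C v = 0} := card_le_card fun v => by simp
  suffices #{v ∈ cutVertices r R | C v ≠ 0} ≤ cutCap (pebblingCap G r C s) R by omega
  rw [card_eq_sum_ones]
  refine le_trans (sum_le_sum fun v hv => ?_) (sum_outNode_le_cutCap fun v hv => ?_)
  · simp only [cutVertices, mem_filter, mem_univ, true_and] at hv
    obtain ⟨⟨hvr, hvin, -⟩, hv0⟩ := hv
    by_cases h2 : 2 ≤ C v
    · calc 1 ≤ pebblingCap G r C s none (outNode v) := by simp [hvr]; omega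
        _ ≤ _ := single_le_sum (f := fun a => pebblingCap G r C s a (outNode v))
          (fun _ _ => Nat.zero_le _) hsrc
    · calc 1 ≤ pebblingCap G r C s (inNode v) (outNode v) := by simp [hvr]; omega
        _ ≤ _ := single_le_sum (f := fun a => pebblingCap G r C s a (outNode v))
          (fun _ _ => Nat.zero_le _) hvin
  · simp only [cutVertices, mem_filter, mem_univ, true_and] at hv
    exact hv.1.2.2

theorem le_cutCap_pebblingCap {k z s : ℕ}
    (hconn : ∀ S : Set V, S.ncard < k → ((⊤ : G.Subgraph).deleteVerts S).coe.Connected)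
    (hzeros : #{v | C v = 0} ≤ z) (hk : s + z ≤ k) (hs : s ≤ ∑ v ∈ univ.erase r, C v / 2)
    {R : Finset (Option (V ⊕ V))} (hsrc : none ∈ R) (hsink : inNode r ∉ R) :
    s ≤ cutCap (pebblingCap G r C s) R := by
  by_cases hcross : ∃ v w, outNode v ∈ R ∧ G.Adj v w ∧ inNode w ∉ R
  · obtain ⟨v, w, hv, hvw, hw⟩ := hcross
    calc s = pebblingCap G r C s (outNode v) (inNode w) := by simp [hvw]
      _ ≤ ∑ a ∈ R, pebblingCap G r C s a (inNode w) :=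
        single_le_sum (f := fun a => pebblingCap G r C s a (inNode w)) (fun _ _ => Nat.zero_le _) hv
      _ ≤ cutCap (pebblingCap G r C s) R := by
        simpa using sum_le_cutCap (T := {inNode w}) (by simpa using hw)
  push Not at hcross
  by_cases hW : ∃ w, w ≠ r ∧ outNode w ∈ R
  · obtain ⟨w, hwr, hw⟩ := hW
    have := le_card_cutVertices hconn hsink hcross hwr hw
    have := card_cutVertices_le_cutCap (G := G) (r := r) (s := s) hzeros hsrc
    omega
  · push Not at hW
    refine hs.trans (le_trans (sum_le_sum fun v hv => ?_)
      (sum_outNode_le_cutCap (S := univ.erase r) fun v hv => hW v (ne_of_mem_erase hv)))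
    calc C v / 2 = pebblingCap G r C s none (outNode v) := by simp [ne_of_mem_erase hv]
      _ ≤ _ := single_le_sum (f := fun a => pebblingCap G r C s a (outNode v))
        (fun _ _ => Nat.zero_le _) hsrc

theorem exists_gain_of_connected {k z s : ℕ}
    (hconn : ∀ S : Set V, S.ncard < k → ((⊤ : G.Subgraph).deleteVerts S).coe.Connected)
    (hzeros : #{v | C v = 0} ≤ z) (hk : s + z ≤ k) (hs : s ≤ ∑ v ∈ univ.erase r, C v / 2) :
    ∃ D, Relation.ReflTransGen (PebStep G) C D ∧ C r + s ≤ D r := by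
  obtain ⟨F, hF, hval⟩ := exists_isFlow_le_outflow (c := pebblingCap G r C s) (t := inNode r)
    pebblingCap_none_right (none_ne_inNode r)
    fun R hsrc hsink => le_cutCap_pebblingCap hconn hzeros hk hs hsrc hsink
  have hbudget : ∀ v, 2 * F none (outNode v) + F (inNode v) (outNode v) ≤ C v := by
    intro v
    have h₁ := hF.1 none (outNode v)
    have h₂ := hF.1 (inNode v) (outNode v)
    simp only [pebblingCap_none_outNode, pebblingCap_inNode_outNode] at h₁ h₂
    split_ifs at h₁ h₂ <;> omega
  obtain ⟨D, hD, hr⟩ := exists_gain_of_flow hF.1 hF.2 hbudget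
  exact ⟨D, hD, by omega⟩

end PebblingNetwork

section Potential

variable {V : Type*} [Fintype V]

lemma numZeros_eq_card [DecidableEq V] (C : V → ℕ) : numZeros C = #{v | C v = 0} := by
  rw [numZeros, ← Set.ncard_coe_finset, coe_filter]
  simp

lemma confSize_add_numZeros_le (C : V → ℕ) :
    confSize C + numZeros C ≤ 2 * potential C + Fintype.card V := by
  classical
  have h : ∀ v, C v + (if C v = 0 then 1 else 0) ≤ 2 * (C v / 2) + 1 := by
    intro v
    split_ifs <;> omega
  calc confSize C + numZeros C = ∑ v, (C v + if C v = 0 then 1 else 0) := by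
        rw [numZeros_eq_card, sum_add_distrib, sum_boole, confSize]
        rfl
    _ ≤ ∑ v, (2 * (C v / 2) + 1) := sum_le_sum fun v _ => h v
    _ = 2 * potential C + Fintype.card V := by
        rw [sum_add_distrib, ← mul_sum, potential]
        simp

end Potential

theorem slide_lemma {V : Type*} [Fintype V] (G : SimpleGraph V) (k : ℕ)
    (hG : KConnected G k) (r : V) (C : V → ℕ) (y z : ℕ)
    (hsize : confSize C = Fintype.card V + y) (hz : numZeros C = z)
    (hk : (y + 3 * z + 1) / 2 ≤ k) :
    Solvable G C r ((y + z + 1) / 2) := by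
  classical
  have hpot := confSize_add_numZeros_le C
  have hsplit : potential C = C r / 2 + ∑ v ∈ univ.erase r, C v / 2 :=
    (add_sum_erase _ _ (mem_univ r)).symm
  obtain ⟨D, hD, hr⟩ := exists_gain_of_connected (r := r) (s := (y + z + 1) / 2 - C r) hG.2
    (numZeros_eq_card C ▸ hz).le (by omega) (by omega)
  exact ⟨D, hD, by omega⟩
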